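/- Let R be a commutative ring and r ∈ R. If C is an R-module that is r-separated and r-complete (the natural map C → lim_n C/r^nC is an isomorphism), then C is an r-contramodule: Hom_R(R[r^{-1}], C) = 0 and Ext^1_R(R[r^{-1}], C) = 0. -/

import Mathlib

/-!
`R[1/r]` has the free resolution `0 → R^(ℕ) → R^(ℕ) → R[1/r] → 0` given by
`eₙ ↦ eₙ - r eₙ₊₁` and `eₙ ↦ r⁻ⁿ`. Hence `Ext¹(R[1/r], C) = 0` amounts to solving
`xₙ - r xₙ₊₁ = gₙ` for every sequence `g` in `C`, which `r`-adic completeness does with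
`xₙ = ∑ₖ rᵏ gₙ₊ₖ`; separatedness guarantees that these limits satisfy the recursion, and it
also kills `Hom(R[1/r], C)`, whose images consist of infinitely `r`-divisible elements.
-/

open CategoryTheory Limits ZeroObject

namespace CategoryTheory

variable {C : Type*} [Category* C]

section TwoTermComplex

variable [HasZeroMorphisms C] [HasZeroObject C]

noncomputable def ShortComplex.twoTermComplex (S : ShortComplex C) : ChainComplex C ℕ :=
  ChainComplex.of (fun | 0 => S.X₂ | 1 => S.X₁ | _ + 2 => 0)
    (fun | 0 => S.f | _ + 1 => 0) (fun _ => zero_comp)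

namespace ShortComplex

variable (S : ShortComplex C)

lemma twoTermComplex_d_one_zero : S.twoTermComplex.d 1 0 = S.f := by
  dsimp only [twoTermComplex]; exact ChainComplex.of_d (V := C) _ _ 0

lemma isZero_twoTermComplex_X (n : ℕ) : IsZero (S.twoTermComplex.X (n + 2)) :=
  isZero_zero C

noncomputable def twoTermComplexπ : S.twoTermComplex ⟶ (ChainComplex.single₀ C).obj S.X₃ :=
  (ChainComplex.toSingle₀Equiv _ _).symm
    ⟨S.g, by rw [twoTermComplex_d_one_zero]; exact S.zero⟩

lemma twoTermComplexπ_f_zero : S.twoTermComplexπ.f 0 = S.g :=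
  ChainComplex.toSingle₀Equiv_symm_apply_f_zero _ _

end ShortComplex

end TwoTermComplex

namespace ShortComplex

variable [Abelian C] {S : ShortComplex C}

lemma twoTermComplex_exactAt [Mono S.f] (n : ℕ) :
    S.twoTermComplex.ExactAt (n + 1) := by
  rw [HomologicalComplex.exactAt_iff' _ (n + 2) (n + 1) n (by simp) (by simp)]
  match n with
  | 0 =>
    refine (ShortComplex.exact_iff_mono _ ((S.isZero_twoTermComplex_X 0).eq_of_src _ _)).2 ?_
    show Mono (S.twoTermComplex.d 1 0)
    rw [twoTermComplex_d_one_zero]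
    exact ‹Mono S.f›
  | m + 1 => exact ShortComplex.exact_of_isZero_X₂ _ (S.isZero_twoTermComplex_X m)

lemma ShortExact.quasiIso_twoTermComplexπ (hS : S.ShortExact) :
    _root_.QuasiIso S.twoTermComplexπ where
  quasiIsoAt
  | 0 => by
    rw [ChainComplex.quasiIsoAt₀_iff, ShortComplex.quasiIso_iff_of_zeros' _ rfl rfl rfl]
    -- in degree 0 the complex is `S` itself, up to rewriting `d 1 0` and `π.f 0`
    refine ⟨(ShortComplex.exact_iff_of_iso ?_).1 hS.exact, ?_⟩
    · exact ShortComplex.isoMk (Iso.refl _) (Iso.refl _) (Iso.refl _)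
        ((Category.id_comp _).trans (S.twoTermComplex_d_one_zero.trans (Category.comp_id _).symm))
        ((Category.id_comp _).trans (S.twoTermComplexπ_f_zero.trans (Category.comp_id _).symm))
    · show Epi (S.twoTermComplexπ.f 0)
      rw [twoTermComplexπ_f_zero]
      exact hS.epi_g
  | n + 1 => by
    rw [quasiIsoAt_iff_exactAt' _ _ (ChainComplex.exactAt_succ_single_obj _ _)]
    have := hS.mono_f
    exact S.twoTermComplex_exactAt n

noncomputable def ShortExact.projectiveResolution (hS : S.ShortExact) [Projective S.X₁]
    [Projective S.X₂] : ProjectiveResolution S.X₃ where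
  complex := S.twoTermComplex
  projective
  | 0 => inferInstanceAs (Projective S.X₂)
  | 1 => inferInstanceAs (Projective S.X₁)
  | _ + 2 => inferInstanceAs (Projective (0 : C))
  π := S.twoTermComplexπ
  quasiIso := hS.quasiIso_twoTermComplexπ

lemma ShortExact.isZero_Ext_one (R : Type*) [Ring R] [Linear R C] [EnoughProjectives C]
    (hS : S.ShortExact) [Projective S.X₁] [Projective S.X₂] (Y : C)
    (hY : ∀ g : S.X₁ ⟶ Y, ∃ f : S.X₂ ⟶ Y, S.f ≫ f = g) :
    IsZero (((Ext R C 1).obj (Opposite.op S.X₃)).obj Y) := by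
  refine IsZero.of_iso ?_ (hS.projectiveResolution.isoExt 1 Y)
  rw [← HomologicalComplex.exactAt_iff_isZero_homology,
    HomologicalComplex.exactAt_iff' _ 0 1 2 (by simp) (by simp)]
  refine (ShortComplex.exact_iff_epi _ ?_).2 ?_
  · refine IsZero.eq_of_tgt (ModuleCat.isZero_of_iff_subsingleton.2 ?_) _ _
    exact ⟨(isZero_zero C).eq_of_src⟩
  · rw [ModuleCat.epi_iff_surjective]
    exact fun g => (hY g).imp fun f hf => (congrArg (· ≫ f) S.twoTermComplex_d_one_zero).trans hf

end ShortComplex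

end CategoryTheory

section AdicSeries

variable {R : Type*} [CommRing R] {I : Ideal R} {M : Type*} [AddCommGroup M] [Module R M]

lemma isPrecomplete_of_forall_sub_succ_mem
    (h : ∀ c : ℕ → M, (∀ n, c (n + 1) - c n ∈ (I ^ n • ⊤ : Submodule R M)) →
      ∃ x, ∀ n, x - c n ∈ (I ^ n • ⊤ : Submodule R M)) : IsPrecomplete I M := by
  refine ⟨fun c hc => ?_⟩
  obtain ⟨x, hx⟩ := h c fun n => SModEq.sub_mem.1 (hc n.le_succ).symm
  exact ⟨x, fun n => (SModEq.sub_mem.2 (hx n)).symm⟩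

lemma IsPrecomplete.exists_smodEq_sum_pow_smul [IsPrecomplete I M] {r : R} (hr : r ∈ I)
    (y : ℕ → M) :
    ∃ L, ∀ m, ∑ k ∈ Finset.range m, r ^ k • y k ≡ L [SMOD (I ^ m • ⊤ : Submodule R M)] := by
  refine IsPrecomplete.prec' _ fun {m n} hmn => SModEq.symm (SModEq.sub_mem.2 ?_)
  rw [← Finset.sum_Ico_eq_sub _ hmn]
  refine Submodule.sum_mem _ fun k hk => Submodule.smul_mem_smul ?_ Submodule.mem_top
  exact Ideal.pow_le_pow_right (Finset.mem_Ico.1 hk).1 (Ideal.pow_mem_pow hr k)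

lemma exists_eq_add_smul_succ [IsHausdorff I M] [IsPrecomplete I M] {r : R} (hr : r ∈ I)
    (g : ℕ → M) : ∃ x : ℕ → M, ∀ n, x n = g n + r • x (n + 1) := by
  choose x hx using fun n => IsPrecomplete.exists_smodEq_sum_pow_smul hr fun k => g (n + k)
  refine ⟨x, fun n => (IsHausdorff.eq_iff_smodEq (I := I)).2 fun m => ?_⟩
  have hsum : ∑ k ∈ Finset.range (m + 1), r ^ k • g (n + k) =
      g n + r • ∑ k ∈ Finset.range m, r ^ k • g (n + 1 + k) := by
    rw [Finset.sum_range_succ', Finset.smul_sum, add_comm]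
    simp only [pow_zero, one_smul, add_zero, pow_succ', mul_smul, add_right_comm n 1, add_assoc]
  calc x n ≡ ∑ k ∈ Finset.range (m + 1), r ^ k • g (n + k) [SMOD (I ^ m • ⊤ : Submodule R M)] :=
        ((hx n (m + 1)).mono (Submodule.smul_mono_left (Ideal.pow_le_pow_right m.le_succ))).symm
    _ = g n + r • ∑ k ∈ Finset.range m, r ^ k • g (n + 1 + k) := hsum
    _ ≡ g n + r • x (n + 1) [SMOD (I ^ m • ⊤ : Submodule R M)] :=
        SModEq.rfl.add ((hx (n + 1) m).smul r)

lemma IsLocalization.Away.linearMap_eq_zero_of_isHausdorff {S : Type*} [CommRing S] [Algebra R S]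
    {r : R} [IsLocalization.Away r S] [IsHausdorff I M] (hr : r ∈ I) (φ : S →ₗ[R] M) : φ = 0 := by
  ext s
  refine IsHausdorff.haus ‹_› _ fun n => SModEq.zero.2 ?_
  have hs : s = r ^ n • (IsLocalization.Away.invSelf r ^ n * s) := by
    rw [Algebra.smul_def, map_pow, ← mul_assoc, ← mul_pow, IsLocalization.Away.mul_invSelf,
      one_pow, one_mul]
  rw [hs, map_smul]
  exact Submodule.smul_mem_smul (Ideal.pow_mem_pow hr n) Submodule.mem_top

end AdicSeries

section Presentation

variable {R : Type*} [CommRing R] (r : R)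

noncomputable def telescope : (ℕ →₀ R) →ₗ[R] ℕ →₀ R :=
  LinearMap.id - r • Finsupp.lmapDomain R R Nat.succ

noncomputable def awayInvPow : (ℕ →₀ R) →ₗ[R] Localization.Away r :=
  Finsupp.linearCombination R (IsLocalization.Away.invSelf r ^ ·)

lemma telescope_single (n : ℕ) (a : R) :
    telescope r (Finsupp.single n a) = Finsupp.single n a - Finsupp.single (n + 1) (r * a) := by
  simp [telescope, Finsupp.smul_single]

lemma awayInvPow_single_mul_pow (n : ℕ) (a : R) :
    awayInvPow r (Finsupp.single n a) * algebraMap R _ r ^ n = algebraMap R _ a := by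
  rw [awayInvPow, Finsupp.linearCombination_single, Algebra.smul_def, mul_assoc, ← mul_pow,
    mul_comm (IsLocalization.Away.invSelf r), IsLocalization.Away.mul_invSelf, one_pow, mul_one]

lemma awayInvPow_comp_telescope : awayInvPow r ∘ₗ telescope r = 0 := by
  refine Finsupp.lhom_ext fun n a => ?_
  have hu := IsLocalization.Away.algebraMap_pow_isUnit (S := Localization.Away r) r (n + 1)
  rw [LinearMap.comp_apply, telescope_single, LinearMap.zero_apply, ← hu.mul_left_eq_zero, map_sub,
    sub_mul, awayInvPow_single_mul_pow, pow_succ, ← mul_assoc, awayInvPow_single_mul_pow]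
  simp [mul_comm]

lemma telescope_injective : Function.Injective (telescope r) := by
  refine (injective_iff_map_eq_zero _).2 fun x hx => Finsupp.ext fun m => ?_
  rw [telescope, LinearMap.sub_apply, sub_eq_zero] at hx
  induction m with
  | zero =>
    simpa [Finsupp.mapDomain_of_notMem_range (f := Nat.succ) x 0 (by simp)] using congr($hx 0)
  | succ m ih => simpa [Finsupp.mapDomain_apply Nat.succ_injective, ih] using congr($hx (m + 1))

lemma awayInvPow_surjective : Function.Surjective (awayInvPow r) := by
  intro z
  obtain ⟨n, a, hz⟩ := IsLocalization.Away.surj r z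
  refine ⟨Finsupp.single n a, ?_⟩
  rw [← (IsLocalization.Away.algebraMap_pow_isUnit r n).mul_left_inj, hz,
    awayInvPow_single_mul_pow]

lemma single_sub_single_mem_range_telescope (n k : ℕ) (a : R) :
    Finsupp.single n a - Finsupp.single (n + k) (r ^ k * a) ∈ LinearMap.range (telescope r) := by
  induction k with
  | zero => simp
  | succ k ih =>
    have step := add_mem ih <|
      LinearMap.mem_range_self (telescope r) (Finsupp.single (n + k) (r ^ k * a))
    rwa [telescope_single, sub_add_sub_cancel, ← mul_assoc, ← pow_succ'] at step

lemma sub_single_mem_range_telescope (x : ℕ →₀ R) (N : ℕ) (hN : ∀ m ∈ x.support, m ≤ N) :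
    x - Finsupp.single N (x.sum fun m a => r ^ (N - m) * a) ∈ LinearMap.range (telescope r) := by
  have hx : x - Finsupp.single N (x.sum fun m a => r ^ (N - m) * a) =
      ∑ m ∈ x.support, (Finsupp.single m (x m) - Finsupp.single N (r ^ (N - m) * x m)) := by
    rw [Finset.sum_sub_distrib, ← Finsupp.single_finsetSum]
    congr 1
    exact x.sum_single.symm
  rw [hx]
  refine Submodule.sum_mem _ fun m hm => ?_
  have := single_sub_single_mem_range_telescope r m (N - m) (x m)
  rwa [Nat.add_sub_cancel' (hN m hm)] at this

lemma ker_awayInvPow_le_range_telescope :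
    LinearMap.ker (awayInvPow r) ≤ LinearMap.range (telescope r) := by
  intro x hx
  set N := x.support.sup id
  set c := x.sum fun m a => r ^ (N - m) * a
  have hxc := sub_single_mem_range_telescope r x N fun m hm => Finset.le_sup (f := id) hm
  have hc0 : awayInvPow r (Finsupp.single N c) = 0 := by
    obtain ⟨y, hy⟩ := hxc
    have := congr(awayInvPow r $hy)
    rwa [← LinearMap.comp_apply, awayInvPow_comp_telescope, LinearMap.zero_apply, map_sub,
      LinearMap.mem_ker.1 hx, zero_sub, eq_comm, neg_eq_zero] at this
  have hc : algebraMap R (Localization.Away r) c = algebraMap R _ 0 := by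
    rw [← awayInvPow_single_mul_pow r N, hc0, zero_mul, map_zero]
  obtain ⟨k, hk⟩ := IsLocalization.Away.exists_of_eq r hc
  have hck := single_sub_single_mem_range_telescope r N k c
  rw [hk, mul_zero, Finsupp.single_zero, sub_zero] at hck
  simpa [c] using add_mem hxc hck

end Presentation

section Contramodule

variable {R : Type*} [CommRing R] (r : R)

noncomputable def awayPresentation : ShortComplex (ModuleCat R) :=
  ShortComplex.mk (ModuleCat.ofHom (telescope r)) (ModuleCat.ofHom (awayInvPow r))
    (ModuleCat.hom_ext (awayInvPow_comp_telescope r))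

lemma awayPresentation_shortExact : (awayPresentation r).ShortExact where
  exact := (ShortComplex.moduleCat_exact_iff_ker_sub_range _).2
    (ker_awayInvPow_le_range_telescope r)
  mono_f := (ModuleCat.mono_iff_injective _).2 (telescope_injective r)
  epi_g := (ModuleCat.epi_iff_surjective _).2 (awayInvPow_surjective r)

instance : Projective (awayPresentation r).X₁ :=
  (IsProjective.iff_projective _).1 inferInstance

instance : Projective (awayPresentation r).X₂ :=
  (IsProjective.iff_projective _).1 inferInstance

variable {r} {I : Ideal R} {M : Type*} [AddCommGroup M] [Module R M]

lemma exists_comp_telescope_eq [IsHausdorff I M] [IsPrecomplete I M] (hr : r ∈ I)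
    (g : (ℕ →₀ R) →ₗ[R] M) : ∃ f : (ℕ →₀ R) →ₗ[R] M, f ∘ₗ telescope r = g := by
  obtain ⟨x, hx⟩ := exists_eq_add_smul_succ hr fun n => g (Finsupp.single n 1)
  refine ⟨Finsupp.linearCombination R x, Finsupp.lhom_ext' fun n => LinearMap.ext_ring ?_⟩
  simp [telescope_single, hx n]

end Contramodule

/-- Let `R` be a commutative ring and `r ∈ R`.  If `C` is an `R`-module
which is `r`-separated (`⋂_n rⁿC = 0`) and `r`-complete (the natural map `C → lim_n C/rⁿC`
is surjective), then `C` is an `r`-contramodule: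
`Hom_R(R[r⁻¹], C) = 0` and `Ext¹_R(R[r⁻¹], C) = 0`. -/
theorem separated_complete_is_contramodule
    (R : Type) [CommRing R] (r : R)
    (C : Type) [AddCommGroup C] [Module R C]
    (hsep : ∀ x : C, (∀ n : ℕ, x ∈ (Ideal.span {r ^ n} • ⊤ : Submodule R C)) → x = 0)
    (hcomp : ∀ c : ℕ → C,
      (∀ n : ℕ, c (n + 1) - c n ∈ (Ideal.span {r ^ n} • ⊤ : Submodule R C)) →
      ∃ x : C, ∀ n : ℕ, x - c n ∈ (Ideal.span {r ^ n} • ⊤ : Submodule R C)) :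
    Subsingleton (Localization.Away r →ₗ[R] C) ∧
    Subsingleton (((Ext R (ModuleCat R) 1).obj
      (Opposite.op (ModuleCat.of R (Localization.Away r)))).obj (ModuleCat.of R C)) := by
  have hr : r ∈ Ideal.span {r} := Ideal.mem_span_singleton_self r
  have : IsHausdorff (Ideal.span {r}) C :=
    ⟨fun x hx => hsep x fun n => by simpa [Ideal.span_singleton_pow, SModEq.zero] using hx n⟩
  have : IsPrecomplete (Ideal.span {r}) C :=
    isPrecomplete_of_forall_sub_succ_mem (by simpa [Ideal.span_singleton_pow] using hcomp)
  refine ⟨subsingleton_of_forall_eq 0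
    (IsLocalization.Away.linearMap_eq_zero_of_isHausdorff hr), ?_⟩
  refine ModuleCat.subsingleton_of_isZero
    ((awayPresentation_shortExact r).isZero_Ext_one R (ModuleCat.of R C) fun g => ?_)
  obtain ⟨f, hf⟩ := exists_comp_telescope_eq hr g.hom
  exact ⟨ModuleCat.ofHom f, ModuleCat.hom_ext hf⟩
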